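/- Partial inversion of an invertible square matrix M with respect to all indices yields the inverse matrix: inv_V M = M⁻¹. -/

import Mathlib

/-- Partial inversion of a square real matrix with respect to a single index `k`. -/
noncomputable def invStep {ι : Type*} [DecidableEq ι] (M : Matrix ι ι ℝ) (k : ι) : Matrix ι ι ℝ :=
  Matrix.of fun i j =>
    if i = k then (if j = k then 1 / M k k else - M k j / M k k)
    else if j = k then M i k / M k k
    else M i j - M i k * M k j / M k k

/-- Partial inversion with respect to a sequence of indices, applied in order. -/
noncomputable def invList {ι : Type*} [DecidableEq ι] (l : List ι) (M : Matrix ι ι ℝ) : Matrix ι ι ℝ :=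
  l.foldl invStep M

/-- All principal submatrices of `M` are invertible. -/
def allPrincipalInvertible {ι : Type*} [Fintype ι] [DecidableEq ι]
    (M : Matrix ι ι ℝ) : Prop :=
  ∀ s : Finset ι,
    (M.submatrix (fun i : s => (i : ι)) (fun i : s => (i : ι))).det ≠ 0

/-! Read `y = M *ᵥ x` as a linear relation between `x` and `y`. Partial inversion at `k`
exchanges the roles of `x k` and `y k`: if `N` maps `u` to `v` and `N k k ≠ 0`, then
`invStep N k` maps `u` with its `k`-th entry replaced by `v k` to `v` with its `k`-th entry
replaced by `u k`. So after sweeping a set `S` of indices the matrix maps `(y on S, x off S)`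
to `(x on S, y off S)`. The next pivot is nonzero because the principal submatrix of `M` on
`S ∪ {k}` is invertible, and once `S` is everything the swept matrix maps `M *ᵥ x` to `x`. -/

open Matrix Finset

section

variable {ι : Type*} [Fintype ι]

lemma mulVec_extend_val_apply (M : Matrix ι ι ℝ) {s : Finset ι} (z : s → ℝ) (i : s) :
    (M *ᵥ Function.extend Subtype.val z 0) i = (M.submatrix (↑) (↑) *ᵥ z) i := by
  have hzero : ∀ j ∉ s, M i j * Function.extend Subtype.val z 0 j = 0 := fun j hj => by
    rw [Function.extend_apply' _ _ _ fun ⟨a, ha⟩ => hj (ha ▸ a.2), Pi.zero_apply, mul_zero]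
  rw [mulVec, dotProduct, ← sum_subset (subset_univ s) fun j _ => hzero j, ← sum_coe_sort s]
  refine sum_congr rfl fun j _ => ?_
  rw [Subtype.val_injective.extend_apply]
  rfl

variable [DecidableEq ι]

lemma invStep_mulVec_update {N : Matrix ι ι ℝ} {k : ι} (hk : N k k ≠ 0) {u v : ι → ℝ}
    (huv : N *ᵥ u = v) :
    invStep N k *ᵥ Function.update u k (v k) = Function.update v k (u k) := by
  set r : ι → ℝ := fun i => ∑ j ∈ {k}ᶜ, N i j * u j
  have hv (i : ι) : v i = N i k * u k + r i := by
    rw [← huv]; exact Fintype.sum_eq_add_sum_compl k _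
  have hrow (i : ι) : (invStep N k *ᵥ Function.update u k (v k)) i
      = invStep N k i k * v k + ∑ j ∈ {k}ᶜ, invStep N k i j * u j := by
    rw [mulVec, dotProduct, Fintype.sum_eq_add_sum_compl k, Function.update_self]
    congr 1
    refine sum_congr rfl fun j hj => ?_
    rw [Function.update_of_ne (by simpa using hj)]
  ext i
  rw [hrow]
  by_cases hik : i = k
  · subst hik
    have hsum : ∑ j ∈ {i}ᶜ, invStep N i i j * u j = -(r i / N i i) := by
      rw [neg_eq_neg_one_mul, mul_div, Finset.mul_sum, Finset.sum_div]
      refine sum_congr rfl fun j hj => ?_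
      simp [invStep, show j ≠ i by simpa using hj]
      ring
    rw [hsum]
    simp only [Function.update_self, hv i, invStep, of_apply, if_true]
    field_simp
    ring
  · have hsum : ∑ j ∈ {k}ᶜ, invStep N k i j * u j = r i - N i k * r k / N k k := by
      rw [mul_div_assoc, Finset.sum_div, Finset.mul_sum, ← Finset.sum_sub_distrib]
      refine sum_congr rfl fun j hj => ?_
      simp [invStep, hik, show j ≠ k by simpa using hj]
      ring
    rw [hsum]
    simp only [Function.update_of_ne hik, hv i, hv k, invStep, of_apply, if_neg hik,
      if_true]
    field_simp
    ring

def IsPartialInverse (M : Matrix ι ι ℝ) (S : Finset ι) (N : Matrix ι ι ℝ) : Prop :=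
  ∀ x : ι → ℝ, N *ᵥ S.piecewise (M *ᵥ x) x = S.piecewise x (M *ᵥ x)

lemma isPartialInverse_empty (M : Matrix ι ι ℝ) : IsPartialInverse M ∅ M :=
  fun _ => by simp only [piecewise_empty]

lemma IsPartialInverse.eq_inv {M N : Matrix ι ι ℝ} (h : IsPartialInverse M univ N) :
    N = M⁻¹ := by
  refine (inv_eq_left_inv (ext_iff_mulVec.2 fun x => ?_)).symm
  simpa only [← mulVec_mulVec, one_mulVec, piecewise_univ] using h x

lemma IsPartialInverse.insert_invStep {M N : Matrix ι ι ℝ} {S : Finset ι} {k : ι}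
    (h : IsPartialInverse M S N) (hk : k ∉ S) (hkk : N k k ≠ 0) :
    IsPartialInverse M (insert k S) (invStep N k) := by
  intro x
  have hstep := invStep_mulVec_update hkk (h x)
  simpa only [piecewise_insert, piecewise_eq_of_notMem _ _ _ hk] using hstep

lemma IsPartialInverse.pivot_ne_zero {M N : Matrix ι ι ℝ} {S : Finset ι} {k : ι}
    (h : IsPartialInverse M S N) (hk : k ∉ S)
    (hdet : (M.submatrix (fun i : ↥(insert k S) => (i : ι))
      (fun i : ↥(insert k S) => (i : ι))).det ≠ 0) :
    N k k ≠ 0 := by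
  obtain ⟨z, hz⟩ := mulVec_surjective_iff_isUnit.2 ((isUnit_iff_isUnit_det _).2 hdet.isUnit)
    (Pi.single ⟨k, mem_insert_self k S⟩ 1)
  -- `x` is supported on `insert k S` and `M *ᵥ x` is `Pi.single k 1` there, so the input
  -- vector is `Pi.single k (x k)` and the `k`-th output is `1 = N k k * x k`.
  set x : ι → ℝ := Function.extend Subtype.val z 0
  have hMx (i : ι) (hi : i ∈ insert k S) : (M *ᵥ x) i = if i = k then 1 else 0 := by
    rw [show i = ((⟨i, hi⟩ : (insert k S : Finset ι)) : ι) from rfl, mulVec_extend_val_apply,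
      hz]
    simp [Pi.single_apply]
  have hinput : S.piecewise (M *ᵥ x) x = Pi.single k (x k) := by
    ext i
    by_cases hiS : i ∈ S
    · have hik : i ≠ k := fun h => hk (h ▸ hiS)
      rw [piecewise_eq_of_mem _ _ _ hiS, hMx i (mem_insert_of_mem hiS), if_neg hik,
        Pi.single_eq_of_ne hik]
    · rw [piecewise_eq_of_notMem _ _ _ hiS]
      by_cases hik : i = k
      · subst hik; rw [Pi.single_eq_same]
      · rw [Pi.single_eq_of_ne hik]
        exact Function.extend_apply' _ _ _ fun ⟨a, ha⟩ => by
          have := a.2; rw [ha, mem_insert] at this; tauto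
  have hkk := congrFun (h x) k
  rw [hinput, mulVec_single, piecewise_eq_of_notMem _ _ _ hk, hMx k (mem_insert_self k S),
    if_pos rfl] at hkk
  exact left_ne_zero_of_mul (hkk.trans_ne one_ne_zero)

lemma IsPartialInverse.foldl_invStep {M : Matrix ι ι ℝ} (hM : allPrincipalInvertible M) :
    ∀ {l : List ι} {S : Finset ι} {N : Matrix ι ι ℝ}, IsPartialInverse M S N → l.Nodup →
      (∀ a ∈ l, a ∉ S) → IsPartialInverse M (S ∪ l.toFinset) (l.foldl invStep N)
  | [], S, N, h, _, _ => by simpa using h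
  | k :: l, S, N, h, hnd, hdisj => by
    have hk : k ∉ S := hdisj k List.mem_cons_self
    have hnext := h.insert_invStep hk (h.pivot_ne_zero hk (hM _))
    have hl := hnext.foldl_invStep hM (List.nodup_cons.1 hnd).2 fun a ha => by
      rw [mem_insert, not_or]
      exact ⟨fun hak => (List.nodup_cons.1 hnd).1 (hak ▸ ha),
        hdisj a (List.mem_cons_of_mem k ha)⟩
    rwa [List.toFinset_cons, union_insert, ← insert_union]

end

/-- partial inversion with respect to all indices gives the inverse matrix. -/
theorem invList_univ {ι : Type*} [Fintype ι] [DecidableEq ι]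
    (M : Matrix ι ι ℝ) (hM : allPrincipalInvertible M)
    (l : List ι) (hnl : l.Nodup) (hall : ∀ i : ι, i ∈ l) :
    invList l M = M⁻¹ := by
  have h := (isPartialInverse_empty M).foldl_invStep hM hnl (by simp)
  rw [empty_union, eq_univ_of_forall fun i => List.mem_toFinset.2 (hall i)] at h
  exact h.eq_inv
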